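/- arXiv:2405.12502 — 4 statements merged into one kernel-verified Lean document; each statement's English description precedes it below -/
import Mathlib

section
/- Let E be a real inner product space and let f⁰, f¹ : E → ℝ both be L-smooth for some L ≥ 0. Fix ω ∈ E and suppose ⟨∇f⁰(ω), ∇f⁰(ω) + ∇f¹(ω)⟩ > 0 and ⟨∇f¹(ω), ∇f⁰(ω) + ∇f¹(ω)⟩ > 0. Then there exists a learning rate η > 0 such that, setting ω' = ω − η(∇f⁰(ω) + ∇f¹(ω)), both f⁰(ω') < f⁰(ω) and f¹(ω') < f¹(ω). -/
open RealInnerProductSpace Filter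

lemma eventually_decrease {E : Type*} [NormedAddCommGroup E]
    [InnerProductSpace ℝ E] [CompleteSpace E]
    (f : E → ℝ) (hf : Differentiable ℝ f) (ω v : E)
    (hp : 0 < ⟪gradient f ω, v⟫) :
    ∀ᶠ η in nhdsWithin (0:ℝ) (Set.Ioi 0), f (ω - η • v) < f ω := by
  have hgrad : HasGradientAt f (gradient f ω) ω := (hf ω).hasGradientAt
  have hF : HasFDerivAt f (InnerProductSpace.toDual ℝ E (gradient f ω)) ω :=
    hgrad.hasFDerivAt
  have hc : HasDerivAt (fun η : ℝ => ω - η • v) (-v) 0 := by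
    simpa using ((hasDerivAt_id (0:ℝ)).smul_const v).const_sub ω
  have hcomp : HasDerivAt (fun η : ℝ => f (ω - η • v))
      (InnerProductSpace.toDual ℝ E (gradient f ω) (-v)) 0 := by
    have hF' : HasFDerivAt f (InnerProductSpace.toDual ℝ E (gradient f ω)) ((0:ℝ) • v |> fun w => ω - w) := by
      simpa using hF
    exact hF'.comp_hasDerivAt 0 hc
  have hval : (InnerProductSpace.toDual ℝ E (gradient f ω)) (-v) = -⟪gradient f ω, v⟫ := by
    simp [InnerProductSpace.toDual_apply_apply]
  rw [hval] at hcomp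
  have hslope := hasDerivAt_iff_tendsto_slope.mp hcomp
  have hneg : ∀ᶠ η in nhdsWithin (0:ℝ) {(0:ℝ)}ᶜ,
      slope (fun η : ℝ => f (ω - η • v)) 0 η < 0 :=
    hslope (Iio_mem_nhds (by linarith))
  have hsub : nhdsWithin (0:ℝ) (Set.Ioi 0) ≤ nhdsWithin (0:ℝ) {(0:ℝ)}ᶜ :=
    nhdsWithin_mono _ (fun x hx => ne_of_gt hx)
  filter_upwards [hsub hneg, self_mem_nhdsWithin] with η hη (hη0 : (0:ℝ) < η)
  have hη' : η⁻¹ * (f (ω - η • v) - f ω) < 0 := by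
    simpa [slope, sub_zero] using hη
  nlinarith [inv_pos.mpr hη0]

/-- Satisfiability of the paper's Assumption 2: if both class gradients have strictly
positive projection onto the total gradient, then there exists a learning rate `η > 0`
such that one gradient-descent step strictly decreases both class losses. -/
theorem exists_learning_rate_decreasing_both {E : Type*} [NormedAddCommGroup E]
    [InnerProductSpace ℝ E] [CompleteSpace E]
    (f0 f1 : E → ℝ) (hf0 : Differentiable ℝ f0) (hf1 : Differentiable ℝ f1)
    (L : ℝ) (hL : 0 ≤ L)
    (h0 : ∀ x y : E, ‖gradient f0 x - gradient f0 y‖ ≤ L * ‖x - y‖)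
    (h1 : ∀ x y : E, ‖gradient f1 x - gradient f1 y‖ ≤ L * ‖x - y‖)
    (ω : E)
    (hp0 : 0 < ⟪gradient f0 ω, gradient f0 ω + gradient f1 ω⟫)
    (hp1 : 0 < ⟪gradient f1 ω, gradient f0 ω + gradient f1 ω⟫) :
    ∃ η : ℝ, 0 < η ∧
      f0 (ω - η • (gradient f0 ω + gradient f1 ω)) < f0 ω ∧
      f1 (ω - η • (gradient f0 ω + gradient f1 ω)) < f1 ω := by
  have e0 := eventually_decrease f0 hf0 ω _ hp0
  have e1 := eventually_decrease f1 hf1 ω _ hp1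
  have : ∀ᶠ η in nhdsWithin (0:ℝ) (Set.Ioi 0), (0:ℝ) < η ∧
      f0 (ω - η • (gradient f0 ω + gradient f1 ω)) < f0 ω ∧
      f1 (ω - η • (gradient f0 ω + gradient f1 ω)) < f1 ω := by
    filter_upwards [e0, e1, self_mem_nhdsWithin] with η h0' h1' hη
    exact ⟨hη, h0', h1'⟩
  exact this.exists
end

section
/- Let E be a real inner product space and let f⁰, f¹ : E → ℝ both be L-smooth for some L ≥ 0. Fix ω ∈ E with ∇₀ := ‖∇f⁰(ω)‖ > 0 and ∇₁ := ‖∇f¹(ω)‖ > 0, set c = ⟨∇f⁰(ω), ∇f¹(ω)⟩, cos θ = c/(∇₀∇₁), S = ‖∇f⁰(ω) + ∇f¹(ω)‖², and assume S > 0. Let η > 0 satisfy ηL ≤ 2(min(∇₀², ∇₁²) + c)/S, let n₀, n₁ > 0 be the class sizes with ratio R = n₀/n₁, let r = ∇₀/∇₁, and set ω' = ω − η(∇f⁰(ω) + ∇f¹(ω)). Then the speed gap Δ := (f⁰(ω) − f⁰(ω'))/n₀ − (f¹(ω) − f¹(ω'))/n₁ satisfies Δ ≥ (η∇₁²/n₀)·((r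 − R·cos θ)² − (R + 1)²). -/
open RealInnerProductSpace

/-!
Both class losses are controlled by the descent lemma: along the step `-η g`, with
`g = ∇f⁰(ω) + ∇f¹(ω)`, each `f^k` changes by `-η⟪∇f^k(ω), g⟫` up to an error `(L/2)η²‖g‖²`,
and the step-size condition makes this error at most `η(∇₁² + c)`. This gives
`f⁰(ω) - f⁰(ω') ≥ η(∇₀² - ∇₁²)` and `f¹(ω) - f¹(ω') ≤ 2η(∇₁² + c)`. Expanding the square,
`∇₁²((r - R cos θ)² - (R + 1)²)` equals `∇₀² - ∇₁² - 2R(∇₁² + c)` minus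
`R²∇₁²(1 - cos² θ) ≥ 0`, which is how the bound is obtained.
-/

section Descent

variable {E : Type*} [NormedAddCommGroup E] [InnerProductSpace ℝ E] [CompleteSpace E]

theorem DifferentiableAt.hasDerivAt_comp_add_smul {f : E → ℝ} {x v : E} {t : ℝ}
    (hf : DifferentiableAt ℝ f (x + t • v)) :
    HasDerivAt (fun s : ℝ => f (x + s • v)) ⟪gradient f (x + t • v), v⟫ t := by
  have hline : HasDerivAt (fun s : ℝ => x + s • v) v t := by
    simpa using ((hasDerivAt_id t).smul_const v).const_add x
  rw [inner_gradient_left]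
  exact hf.hasFDerivAt.comp_hasDerivAt t hline

theorem abs_sub_sub_inner_gradient_le {f : E → ℝ} (hf : Differentiable ℝ f) {L : ℝ}
    (hlip : ∀ x y : E, ‖gradient f x - gradient f y‖ ≤ L * ‖x - y‖) (x v : E) :
    |f (x + v) - f x - ⟪gradient f x, v⟫| ≤ L / 2 * ‖v‖ ^ 2 := by
  have hderiv (t : ℝ) : HasDerivAt (fun s : ℝ => f (x + s • v) - f x - s * ⟪gradient f x, v⟫)
      (⟪gradient f (x + t • v), v⟫ - ⟪gradient f x, v⟫) t :=
    ((hf _).hasDerivAt_comp_add_smul.sub_const (f x)).sub (hasDerivAt_mul_const _)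
  have hbound (t : ℝ) (ht : t ∈ Set.Ico (0 : ℝ) 1) :
      ‖⟪gradient f (x + t • v), v⟫ - ⟪gradient f x, v⟫‖ ≤ L * t * ‖v‖ ^ 2 :=
    calc ‖⟪gradient f (x + t • v), v⟫ - ⟪gradient f x, v⟫‖
        = ‖⟪gradient f (x + t • v) - gradient f x, v⟫‖ := by rw [inner_sub_left]
      _ ≤ ‖gradient f (x + t • v) - gradient f x‖ * ‖v‖ := norm_inner_le_norm _ _
      _ ≤ L * ‖x + t • v - x‖ * ‖v‖ := by gcongr; exact hlip _ _
      _ = L * t * ‖v‖ ^ 2 := by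
        rw [add_sub_cancel_left, norm_smul, Real.norm_of_nonneg ht.1]; ring
  have hcompare := image_norm_le_of_norm_deriv_right_le_deriv_boundary
    (f := fun s : ℝ => f (x + s • v) - f x - s * ⟪gradient f x, v⟫)
    (B := fun t => L / 2 * t ^ 2 * ‖v‖ ^ 2) (B' := fun t => L * t * ‖v‖ ^ 2)
    (fun t _ => (hderiv t).continuousAt.continuousWithinAt)
    (fun t _ => (hderiv t).hasDerivWithinAt) (by simp)
    (fun t => (((hasDerivAt_pow 2 t).const_mul (L / 2)).mul_const (‖v‖ ^ 2)).congr_deriv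
      (by push_cast; ring))
    hbound (Set.right_mem_Icc.2 zero_le_one)
  simpa using hcompare

theorem abs_sub_sub_smul_inner_gradient_le {f : E → ℝ} (hf : Differentiable ℝ f) {L : ℝ}
    (hlip : ∀ x y : E, ‖gradient f x - gradient f y‖ ≤ L * ‖x - y‖) (x d : E) (η : ℝ) :
    |f x - f (x - η • d) - η * ⟪gradient f x, d⟫| ≤ L / 2 * η ^ 2 * ‖d‖ ^ 2 := by
  have h := abs_sub_sub_inner_gradient_le hf hlip x (-(η • d))
  rw [← sub_eq_add_neg, inner_neg_right, real_inner_smul_right, norm_neg, norm_smul,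
    Real.norm_eq_abs, mul_pow, sq_abs, ← mul_assoc, ← abs_neg] at h
  convert h using 2
  ring

end Descent

theorem sq_mul_sub_sq_le_of_sq_le {A B c R : ℝ} (hA : A ≠ 0) (hB : B ≠ 0)
    (hc : c ^ 2 ≤ A ^ 2 * B ^ 2) :
    B ^ 2 * ((A / B - R * (c / (A * B))) ^ 2 - (R + 1) ^ 2) ≤
      A ^ 2 - B ^ 2 - 2 * R * (B ^ 2 + c) := by
  have hgap : B ^ 2 * ((A / B - R * (c / (A * B))) ^ 2 - (R + 1) ^ 2) =
      A ^ 2 - B ^ 2 - 2 * R * (B ^ 2 + c) - R ^ 2 * (A ^ 2 * B ^ 2 - c ^ 2) / A ^ 2 := by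
    field_simp
    ring
  have hnonneg : 0 ≤ R ^ 2 * (A ^ 2 * B ^ 2 - c ^ 2) / A ^ 2 := by
    have : 0 ≤ A ^ 2 * B ^ 2 - c ^ 2 := sub_nonneg.2 hc
    positivity
  linarith

theorem speed_gap_ge_of_decrease_bounds {A B c η n0 n1 D0 D1 : ℝ} (hA : A ≠ 0) (hB : B ≠ 0)
    (hc : c ^ 2 ≤ A ^ 2 * B ^ 2) (hη : 0 ≤ η) (hn0 : 0 < n0) (hn1 : 0 < n1)
    (hD0 : η * (A ^ 2 - B ^ 2) ≤ D0) (hD1 : D1 ≤ 2 * η * (B ^ 2 + c)) :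
    η * B ^ 2 / n0 * ((A / B - n0 / n1 * (c / (A * B))) ^ 2 - (n0 / n1 + 1) ^ 2) ≤
      D0 / n0 - D1 / n1 :=
  calc η * B ^ 2 / n0 * ((A / B - n0 / n1 * (c / (A * B))) ^ 2 - (n0 / n1 + 1) ^ 2)
      = η / n0 * (B ^ 2 * ((A / B - n0 / n1 * (c / (A * B))) ^ 2 - (n0 / n1 + 1) ^ 2)) := by
        ring
    _ ≤ η / n0 * (A ^ 2 - B ^ 2 - 2 * (n0 / n1) * (B ^ 2 + c)) := by
        gcongr
        exact sq_mul_sub_sq_le_of_sq_le hA hB hc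
    _ = η * (A ^ 2 - B ^ 2) / n0 - 2 * η * (B ^ 2 + c) / n1 := by
        field_simp
    _ ≤ D0 / n0 - D1 / n1 := by gcongr

theorem speed_gap_lower_bound_general {E : Type*} [NormedAddCommGroup E]
    [InnerProductSpace ℝ E] [CompleteSpace E]
    (f0 f1 : E → ℝ) (hf0 : Differentiable ℝ f0) (hf1 : Differentiable ℝ f1)
    (L : ℝ)
    (h0 : ∀ x y : E, ‖gradient f0 x - gradient f0 y‖ ≤ L * ‖x - y‖)
    (h1 : ∀ x y : E, ‖gradient f1 x - gradient f1 y‖ ≤ L * ‖x - y‖)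
    (ω : E)
    (hg0 : 0 < ‖gradient f0 ω‖) (hg1 : 0 < ‖gradient f1 ω‖)
    (hS : 0 < ‖gradient f0 ω + gradient f1 ω‖ ^ 2)
    (η : ℝ) (hη : 0 < η)
    (hηL : η * L ≤
      2 * (min (‖gradient f0 ω‖ ^ 2) (‖gradient f1 ω‖ ^ 2) +
          ⟪gradient f0 ω, gradient f1 ω⟫) /
        ‖gradient f0 ω + gradient f1 ω‖ ^ 2)
    (n0 n1 : ℝ) (hn0 : 0 < n0) (hn1 : 0 < n1)
    (ω' : E) (hω' : ω' = ω - η • (gradient f0 ω + gradient f1 ω)) :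
    (f0 ω - f0 ω') / n0 - (f1 ω - f1 ω') / n1 ≥
      η * ‖gradient f1 ω‖ ^ 2 / n0 *
        ((‖gradient f0 ω‖ / ‖gradient f1 ω‖ -
            n0 / n1 *
              (⟪gradient f0 ω, gradient f1 ω⟫ /
                (‖gradient f0 ω‖ * ‖gradient f1 ω‖))) ^ 2 -
          (n0 / n1 + 1) ^ 2) := by
  subst hω'
  set g0 := gradient f0 ω
  set g1 := gradient f1 ω
  have hquad : L / 2 * η ^ 2 * ‖g0 + g1‖ ^ 2 ≤ η * (‖g1‖ ^ 2 + ⟪g0, g1⟫) :=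
    calc L / 2 * η ^ 2 * ‖g0 + g1‖ ^ 2 = η / 2 * (η * L * ‖g0 + g1‖ ^ 2) := by ring
      _ ≤ η / 2 * (2 * (min (‖g0‖ ^ 2) (‖g1‖ ^ 2) + ⟪g0, g1⟫)) :=
        mul_le_mul_of_nonneg_left ((le_div_iff₀ hS).1 hηL) (by positivity)
      _ ≤ η * (‖g1‖ ^ 2 + ⟪g0, g1⟫) := by
        rw [← mul_assoc, div_mul_cancel₀ η two_ne_zero]
        gcongr
        exact min_le_right _ _
  have hD0 := abs_sub_sub_smul_inner_gradient_le hf0 h0 ω (g0 + g1) η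
  have hD1 := abs_sub_sub_smul_inner_gradient_le hf1 h1 ω (g0 + g1) η
  rw [inner_add_right, real_inner_self_eq_norm_sq] at hD0
  rw [inner_add_right, real_inner_self_eq_norm_sq, real_inner_comm] at hD1
  have hCS : ⟪g0, g1⟫ ^ 2 ≤ ‖g0‖ ^ 2 * ‖g1‖ ^ 2 := by
    rw [← mul_pow, ← sq_abs]
    exact pow_le_pow_left₀ (abs_nonneg _) (abs_real_inner_le_norm g0 g1) 2
  refine speed_gap_ge_of_decrease_bounds hg0.ne' hg1.ne' hCS hη.le hn0 hn1 ?_ ?_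
  · linarith [(abs_le.1 hD0).1]
  · linarith [(abs_le.1 hD1).2]

/-- The paper's lower bound (Eq. (19)) on the speed gap
`Δ = (f⁰(ω) - f⁰(ω'))/n₀ - (f¹(ω) - f¹(ω'))/n₁` under one gradient-descent step:
`Δ ≥ (η∇₁²/n₀)((r - R·cos θ)² - (R + 1)²)`. -/
theorem speed_gap_lower_bound {E : Type*} [NormedAddCommGroup E]
    [InnerProductSpace ℝ E] [CompleteSpace E]
    (f0 f1 : E → ℝ) (hf0 : Differentiable ℝ f0) (hf1 : Differentiable ℝ f1)
    (L : ℝ) (hL : 0 ≤ L)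
    (h0 : ∀ x y : E, ‖gradient f0 x - gradient f0 y‖ ≤ L * ‖x - y‖)
    (h1 : ∀ x y : E, ‖gradient f1 x - gradient f1 y‖ ≤ L * ‖x - y‖)
    (ω : E)
    (hg0 : 0 < ‖gradient f0 ω‖) (hg1 : 0 < ‖gradient f1 ω‖)
    (hS : 0 < ‖gradient f0 ω + gradient f1 ω‖ ^ 2)
    (η : ℝ) (hη : 0 < η)
    (hηL : η * L ≤
      2 * (min (‖gradient f0 ω‖ ^ 2) (‖gradient f1 ω‖ ^ 2) +
          ⟪gradient f0 ω, gradient f1 ω⟫) /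
        ‖gradient f0 ω + gradient f1 ω‖ ^ 2)
    (n0 n1 : ℝ) (hn0 : 0 < n0) (hn1 : 0 < n1)
    (ω' : E) (hω' : ω' = ω - η • (gradient f0 ω + gradient f1 ω)) :
    (f0 ω - f0 ω') / n0 - (f1 ω - f1 ω') / n1 ≥
      η * ‖gradient f1 ω‖ ^ 2 / n0 *
        ((‖gradient f0 ω‖ / ‖gradient f1 ω‖ -
            n0 / n1 *
              (⟪gradient f0 ω, gradient f1 ω⟫ /
                (‖gradient f0 ω‖ * ‖gradient f1 ω‖))) ^ 2 -
          (n0 / n1 + 1) ^ 2) :=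
  speed_gap_lower_bound_general f0 f1 hf0 hf1 L h0 h1 ω hg0 hg1 hS η hη hηL n0 n1 hn0 hn1 ω' hω'
end

section
/- Let v₁, …, v_n be positive real losses, and let the index set {1, …, n} be partitioned into an inlier set I and an outlier set O such that v_i ≤ v_j for every i ∈ I and j ∈ O. Let t ∈ (0, 1] and define w by w_i = t·v_i for i ∈ I and w_j = v_j for j ∈ O. Then H(w) ≤ H(v), where for a positive vector x with normalization u_k = x_k / Σ_m x_m, the loss entropy is H(x) = −Σ_k u_k log u_k. -/
/-!
Since `H(x) = log Σ x - (Σ x log x) / Σ x`, shrinking the inlier losses by `s` makes the entropy an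
explicit function of `s`, with derivative `(A D - B C - A B log s) / (s A + B)²`, where `A, B` are
the inlier and outlier totals and `C, D` their sums of `v log v`. The term `-A B log s` is
nonnegative for `s ≤ 1`, and `B C ≤ A D` is Chebyshev's sum inequality: by inlier priority, every
inlier log-loss is at most every outlier log-loss. So the entropy increases on `(0, 1]`.
-/

open Real Finset

/-- The loss entropy (Eqs. (10)–(11)) of a vector of losses `x`:
`H(x) = -Σ_k u_k log u_k` where `u_k = x_k / Σ_m x_m`. -/
noncomputable def lossEntropy {n : ℕ} (x : Fin n → ℝ) : ℝ :=
  -∑ k, (x k / ∑ m, x m) * Real.log (x k / ∑ m, x m)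

theorem lossEntropy_eq_log_sum_sub_div {n : ℕ} (x : Fin n → ℝ) :
    lossEntropy x = log (∑ m, x m) - (∑ k, x k * log (x k)) / ∑ m, x m := by
  unfold lossEntropy
  set S := ∑ m, x m
  rcases eq_or_ne S 0 with hS | hS
  · simp [hS]
  have hterm : ∀ k, x k / S * log (x k / S) = x k * log (x k) / S - x k / S * log S := by
    intro k
    rcases eq_or_ne (x k) 0 with hx | hx
    · simp [hx]
    · rw [log_div hx hS]
      ring
  rw [sum_congr rfl fun k _ => hterm k, sum_sub_distrib, ← sum_div, ← sum_mul, ← sum_div,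
    div_self hS]
  ring

theorem mul_log_mul (s x : ℝ) : s * x * log (s * x) = s * x * log s + s * (x * log x) := by
  rcases eq_or_ne s 0 with hs | hs
  · simp [hs]
  rcases eq_or_ne x 0 with hx | hx
  · simp [hx]
  rw [log_mul hs hx]
  ring

theorem sum_ite_mem_eq_add_sum_compl {ι M : Type*} [Fintype ι] [DecidableEq ι]
    [AddCommMonoid M] (I : Finset ι) (f g : ι → M) :
    ∑ k, (if k ∈ I then f k else g k) = ∑ i ∈ I, f i + ∑ j ∈ Iᶜ, g j := by
  rw [← sum_add_sum_compl I]
  congr 1 <;> refine sum_congr rfl fun k hk => ?_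
  · rw [if_pos hk]
  · rw [if_neg (mem_compl.1 hk)]

theorem sum_mul_sum_mul_log_le {ι : Type*} (P Q : Finset ι) (v : ι → ℝ)
    (hP : ∀ i ∈ P, 0 ≤ v i) (hPQ : ∀ i ∈ P, ∀ j ∈ Q, v i ≤ v j) :
    (∑ j ∈ Q, v j) * ∑ i ∈ P, v i * log (v i) ≤ (∑ i ∈ P, v i) * ∑ j ∈ Q, v j * log (v j) := by
  rw [sum_mul_sum, sum_mul_sum, sum_comm]
  refine sum_le_sum fun i hi => sum_le_sum fun j hj => ?_
  rcases (hP i hi).eq_or_lt with hvi | hvi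
  · simp [← hvi]
  have hlog : log (v i) ≤ log (v j) := log_le_log hvi (hPQ i hi j hj)
  have hvij : 0 ≤ v i * v j := mul_nonneg hvi.le (hvi.le.trans (hPQ i hi j hj))
  nlinarith

/-- The loss entropy after scaling by `s` the inlier losses, whose total is `A` and whose
`∑ v log v` is `C`, while the outlier losses keep total `B` and `∑ v log v = D`. -/
noncomputable def shrunkEntropy (A B C D s : ℝ) : ℝ :=
  log (s * A + B) - (s * C + s * A * log s + D) / (s * A + B)

theorem lossEntropy_ite_mul_eq_shrunkEntropy {n : ℕ} (v : Fin n → ℝ) (I : Finset (Fin n))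
    (s : ℝ) :
    lossEntropy (fun k => if k ∈ I then s * v k else v k) =
      shrunkEntropy (∑ i ∈ I, v i) (∑ j ∈ Iᶜ, v j) (∑ i ∈ I, v i * log (v i))
        (∑ j ∈ Iᶜ, v j * log (v j)) s := by
  have hsum := sum_ite_mem_eq_add_sum_compl I (fun k => s * v k) v
  have hterm : ∀ k, (if k ∈ I then s * v k else v k) * log (if k ∈ I then s * v k else v k) =
      if k ∈ I then s * v k * log (s * v k) else v k * log (v k) := fun k => by
    split_ifs <;> rfl
  rw [lossEntropy_eq_log_sum_sub_div, hsum, sum_congr rfl fun k _ => hterm k,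
    sum_ite_mem_eq_add_sum_compl]
  simp only [mul_log_mul, sum_add_distrib, ← sum_mul, ← mul_sum, shrunkEntropy]
  ring

theorem hasDerivAt_shrunkEntropy (A B C D : ℝ) {s : ℝ} (hs : s ≠ 0) (hden : s * A + B ≠ 0) :
    HasDerivAt (shrunkEntropy A B C D)
      ((A * D - B * C - A * B * log s) / (s * A + B) ^ 2) s := by
  have hlin : HasDerivAt (fun s : ℝ => s * A + B) A s := by
    simpa using ((hasDerivAt_id s).mul_const A).add_const B
  have hnum : HasDerivAt (fun s : ℝ => s * C + s * A * log s + D)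
      (C + (A * log s + s * A * s⁻¹)) s := by
    have hC : HasDerivAt (fun s : ℝ => s * C) C s := by
      simpa using (hasDerivAt_id s).mul_const C
    have hAlog : HasDerivAt (fun s : ℝ => s * A * log s) (A * log s + s * A * s⁻¹) s := by
      simpa using ((hasDerivAt_id s).mul_const A).fun_mul (hasDerivAt_log hs)
    simpa using (hC.add hAlog).add_const D
  refine ((hlin.log hden).fun_sub (hnum.fun_div hlin hden)).congr_deriv ?_
  field_simp
  ring

theorem monotoneOn_shrunkEntropy {A B C D : ℝ} (hA : 0 ≤ A) (hB : 0 ≤ B) (hAB : 0 < A + B)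
    (hCD : B * C ≤ A * D) : MonotoneOn (shrunkEntropy A B C D) (Set.Ioc 0 1) := by
  have hden : ∀ s, 0 < s → 0 < s * A + B := fun s hs => by
    rcases hA.eq_or_lt with rfl | hA'
    · simpa using hAB
    · nlinarith
  have hderiv : ∀ s, 0 < s → HasDerivAt (shrunkEntropy A B C D)
      ((A * D - B * C - A * B * log s) / (s * A + B) ^ 2) s := fun s hs =>
    hasDerivAt_shrunkEntropy A B C D hs.ne' (hden s hs).ne'
  have hint : interior (Set.Ioc (0 : ℝ) 1) = Set.Ioo 0 1 := interior_Ioc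
  refine monotoneOn_of_deriv_nonneg (convex_Ioc 0 1)
    (fun s hs => (hderiv s hs.1).continuousAt.continuousWithinAt)
    (fun s hs => ?_) (fun s hs => ?_) <;> rw [hint] at hs
  · exact (hderiv s hs.1).differentiableAt.differentiableWithinAt
  · rw [(hderiv s hs.1).deriv]
    have hlog : A * B * log s ≤ 0 :=
      mul_nonpos_of_nonneg_of_nonpos (mul_nonneg hA hB) (log_nonpos hs.1.le hs.2.le)
    exact div_nonneg (by linarith) (sq_nonneg _)

theorem shrunkEntropy_le_shrunkEntropy_one {A B C D t : ℝ} (hA : 0 ≤ A) (hB : 0 ≤ B)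
    (hCD : B * C ≤ A * D) (ht0 : 0 < t) (ht1 : t ≤ 1) :
    shrunkEntropy A B C D t ≤ shrunkEntropy A B C D 1 := by
  rcases (add_nonneg hA hB).eq_or_lt with hAB | hAB
  · -- both sides are the junk value `log 0 - _ / 0 = 0`
    obtain ⟨rfl, rfl⟩ : A = 0 ∧ B = 0 := ⟨by linarith, by linarith⟩
    simp [shrunkEntropy]
  exact monotoneOn_shrunkEntropy hA hB hAB hCD ⟨ht0, ht1⟩ ⟨one_pos, le_rfl⟩ ht1

/-- Deterministic form of Theorem 1: if every inlier loss is at most every outlier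
loss (inlier priority) and all inlier losses are shrunk by a common factor
`t ∈ (0, 1]`, then the loss entropy does not increase. -/
theorem lossEntropy_le_of_inlier_shrink {n : ℕ} (v : Fin n → ℝ) (hv : ∀ k, 0 < v k)
    (I : Finset (Fin n))
    (hprio : ∀ i ∈ I, ∀ j ∈ Iᶜ, v i ≤ v j)
    (t : ℝ) (ht0 : 0 < t) (ht1 : t ≤ 1) :
    lossEntropy (fun k => if k ∈ I then t * v k else v k) ≤ lossEntropy v := by
  have hunshrunk : lossEntropy v = lossEntropy (fun k => if k ∈ I then 1 * v k else v k) := by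
    simp only [one_mul, ite_self]
  rw [hunshrunk, lossEntropy_ite_mul_eq_shrunkEntropy, lossEntropy_ite_mul_eq_shrunkEntropy]
  exact shrunkEntropy_le_shrunkEntropy_one (sum_nonneg fun i _ => (hv i).le)
    (sum_nonneg fun j _ => (hv j).le)
    (sum_mul_sum_mul_log_le I Iᶜ v (fun i _ => (hv i).le) hprio) ht0 ht1
end

section
/- Let v₁, …, v_n be positive real losses, and let the index set {1, …, n} be partitioned into an inlier set I and an outlier set O such that v_i ≤ v_j for every i ∈ I and j ∈ O. Let t ∈ (0, 1] and define w by w_i = t·v_i for i ∈ I and w_j = v_j for j ∈ O. Let p and q be the normalized probability vectors p_k = v_k/Σ_m v_m and q_k = w_k/Σ_m w_m. Then q majorizes p: for every k with 1 ≤ k ≤ n, the sum of the k largest entries of q is greater than or equal to the sum of the k largest entries of p. -/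
/-- The sum of the `k` largest entries of `x : Fin n → ℝ`, expressed as the supremum
of the sums of `x` over all index subsets of cardinality `k`. -/
noncomputable def topSum {n : ℕ} (x : Fin n → ℝ) (k : ℕ) : ℝ :=
  sSup ((fun s : Finset (Fin n) => ∑ i ∈ s, x i) '' {s | s.card = k})

lemma sum_compare_aux {n : ℕ} (v : Fin n → ℝ) (a b : Finset (Fin n))
    (hcard : a.card = b.card) (h : ∀ i ∈ a, ∀ j ∈ b, v i ≤ v j) :
    ∑ i ∈ a, v i ≤ ∑ j ∈ b, v j := by
  rcases b.eq_empty_or_nonempty with hb | hb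
  · subst hb
    rw [Finset.card_empty, Finset.card_eq_zero] at hcard
    simp [hcard]
  · obtain ⟨j0, hj0, hj0min⟩ := b.exists_min_image v hb
    have h1 : ∑ i ∈ a, v i ≤ a.card • v j0 :=
      Finset.sum_le_card_nsmul a v _ (fun i hi => h i hi _ hj0)
    have h2 : b.card • v j0 ≤ ∑ j ∈ b, v j :=
      Finset.card_nsmul_le_sum b v _ hj0min
    rw [hcard] at h1; linarith

lemma exists_good_set_aux {n : ℕ} (v : Fin n → ℝ) (hv : ∀ k, 0 < v k)
    (I : Finset (Fin n)) (hprio : ∀ i ∈ I, ∀ j ∈ Iᶜ, v i ≤ v j)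
    (s : Finset (Fin n)) :
    ∃ s' : Finset (Fin n), s'.card = s.card ∧ (s' ⊆ Iᶜ ∨ Iᶜ ⊆ s') ∧
      ∑ i ∈ s, v i ≤ ∑ i ∈ s', v i := by
  have hc1 : (s ∩ Iᶜ).card ≤ s.card := Finset.card_le_card Finset.inter_subset_left
  have hc2 : (Iᶜ \ s).card + (Iᶜ ∩ s).card = Iᶜ.card := Finset.card_sdiff_add_card_inter _ _
  have hc3 : (s \ Iᶜ).card + (s ∩ Iᶜ).card = s.card := Finset.card_sdiff_add_card_inter _ _
  have hcomm : (Iᶜ ∩ s).card = (s ∩ Iᶜ).card := by rw [Finset.inter_comm]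
  have hsdI : ∀ i ∈ s \ Iᶜ, i ∈ I := by
    intro i hi
    rw [Finset.mem_sdiff, Finset.mem_compl] at hi
    exact not_not.mp hi.2
  by_cases hkc : s.card ≤ Iᶜ.card
  · -- take s' ⊆ Iᶜ
    obtain ⟨e, he1, he2⟩ := Finset.exists_subset_card_eq
      (s := Iᶜ \ s) (n := s.card - (s ∩ Iᶜ).card) (by omega)
    have hdisj : Disjoint (s ∩ Iᶜ) e := by
      rw [Finset.disjoint_left]
      intro x hx hxe
      exact ((Finset.mem_sdiff.mp (he1 hxe)).2) (Finset.mem_inter.mp hx).1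
    refine ⟨(s ∩ Iᶜ) ∪ e, ?_, Or.inl ?_, ?_⟩
    · rw [Finset.card_union_of_disjoint hdisj, he2]; omega
    · exact Finset.union_subset Finset.inter_subset_right
        (he1.trans (Finset.sdiff_subset))
    · rw [Finset.sum_union hdisj]
      have key : ∑ i ∈ s \ Iᶜ, v i ≤ ∑ i ∈ e, v i := by
        apply sum_compare_aux v _ _ (by omega)
        intro i hi j hj
        exact hprio i (hsdI i hi) j (Finset.mem_sdiff.mp (he1 hj)).1
      have := Finset.sum_inter_add_sum_sdiff s Iᶜ v
      linarith
  · -- take Iᶜ ⊆ s'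
    obtain ⟨r, hr1, hr2⟩ := Finset.exists_subset_card_eq
      (s := s \ Iᶜ) (n := (Iᶜ \ s).card) (by omega)
    have hrs : r ⊆ s := hr1.trans Finset.sdiff_subset
    have hdisj : Disjoint (s \ r) (Iᶜ \ s) := by
      rw [Finset.disjoint_left]
      intro x hx hxe
      exact (Finset.mem_sdiff.mp hxe).2 (Finset.mem_sdiff.mp hx).1
    refine ⟨(s \ r) ∪ (Iᶜ \ s), ?_, Or.inr ?_, ?_⟩
    · rw [Finset.card_union_of_disjoint hdisj, Finset.card_sdiff_of_subset hrs, hr2]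
      have := Finset.card_le_card hrs
      omega
    · intro j hj
      rw [Finset.mem_union]
      by_cases hjs : j ∈ s
      · left
        rw [Finset.mem_sdiff]
        refine ⟨hjs, fun hjr => ?_⟩
        exact (Finset.mem_sdiff.mp (hr1 hjr)).2 hj
      · right; exact Finset.mem_sdiff.mpr ⟨hj, hjs⟩
    · rw [Finset.sum_union hdisj]
      have key : ∑ i ∈ r, v i ≤ ∑ i ∈ Iᶜ \ s, v i := by
        apply sum_compare_aux v _ _ hr2
        intro i hi j hj
        exact hprio i (hsdI i (hr1 hi)) j (Finset.mem_sdiff.mp hj).1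
      have := Finset.sum_sdiff (f := v) hrs
      linarith

lemma ratio_le_aux {n : ℕ} (v : Fin n → ℝ) (hv : ∀ k, 0 < v k)
    (I : Finset (Fin n)) (t : ℝ) (ht0 : 0 < t) (ht1 : t ≤ 1)
    (hn : 0 < n)
    (s' : Finset (Fin n)) (hcond : s' ⊆ Iᶜ ∨ Iᶜ ⊆ s') :
    (∑ i ∈ s', v i) / (∑ m, v m) ≤
      (∑ i ∈ s', if i ∈ I then t * v i else v i) /
        (∑ m, if m ∈ I then t * v m else v m) := by
  haveI : Nonempty (Fin n) := ⟨⟨0, hn⟩⟩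
  set w : Fin n → ℝ := fun k => if k ∈ I then t * v k else v k with hw
  have hwpos : ∀ k, 0 < w k := by
    intro k; simp only [hw]; split
    · exact mul_pos ht0 (hv k)
    · exact hv k
  have hwle : ∀ k, w k ≤ v k := by
    intro k; simp only [hw]; split
    · nlinarith [hv k]
    · exact le_refl _
  have hS : 0 < ∑ m, v m := Finset.sum_pos (fun i _ => hv i) Finset.univ_nonempty
  have hT : 0 < ∑ m, w m := Finset.sum_pos (fun i _ => hwpos i) Finset.univ_nonempty
  have hTS : ∑ m, w m ≤ ∑ m, v m := Finset.sum_le_sum (fun i _ => hwle i)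
  show (∑ i ∈ s', v i) / (∑ m, v m) ≤ (∑ i ∈ s', w i) / (∑ m, w m)
  rcases hcond with hsub | hsup
  · have heq : ∑ i ∈ s', w i = ∑ i ∈ s', v i := by
      apply Finset.sum_congr rfl
      intro i hi
      simp only [hw]
      rw [if_neg (Finset.mem_compl.mp (hsub hi))]
    rw [heq, div_le_div_iff₀ hS hT]
    have hnn : 0 ≤ ∑ i ∈ s', v i := Finset.sum_nonneg (fun i _ => (hv i).le)
    nlinarith
  · set A := ∑ i ∈ Iᶜ, v i with hA
    set B := ∑ i ∈ s' ∩ I, v i with hB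
    set C := ∑ i ∈ I \ s', v i with hC
    have hA0 : 0 ≤ A := Finset.sum_nonneg (fun i _ => (hv i).le)
    have hB0 : 0 ≤ B := Finset.sum_nonneg (fun i _ => (hv i).le)
    have hC0 : 0 ≤ C := Finset.sum_nonneg (fun i _ => (hv i).le)
    have hsplit : s' ∩ Iᶜ = Iᶜ := Finset.inter_eq_right.mpr hsup
    have hsplit2 : s' \ Iᶜ = s' ∩ I := by
      ext x; simp [Finset.mem_sdiff, Finset.mem_inter, Finset.mem_compl, and_comm]
    have hIsplit : ∑ i ∈ I, v i = B + C := by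
      have h1 := Finset.sum_inter_add_sum_sdiff I s' v
      rw [Finset.inter_comm] at h1
      linarith
    have hIw : ∑ i ∈ I, w i = t * ∑ i ∈ I, v i := by
      rw [Finset.mul_sum]
      exact Finset.sum_congr rfl (fun i hi => by simp only [hw]; rw [if_pos hi])
    have hIcw : ∀ (u : Finset (Fin n)), u ⊆ Iᶜ → ∑ i ∈ u, w i = ∑ i ∈ u, v i := by
      intro u hu
      exact Finset.sum_congr rfl (fun i hi => by
        simp only [hw]; rw [if_neg (Finset.mem_compl.mp (hu hi))])
    have e1 : ∑ i ∈ s', v i = A + B := by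
      have := Finset.sum_inter_add_sum_sdiff s' Iᶜ v
      rw [hsplit, hsplit2] at this
      linarith
    have e2 : ∑ i ∈ s', w i = A + t * B := by
      have := Finset.sum_inter_add_sum_sdiff s' Iᶜ w
      rw [hsplit, hsplit2] at this
      have h2 : ∑ i ∈ s' ∩ I, w i = t * B := by
        rw [hB, Finset.mul_sum]
        exact Finset.sum_congr rfl (fun i hi => by
          simp only [hw]; rw [if_pos (Finset.mem_inter.mp hi).2])
      rw [hIcw Iᶜ (le_refl _), h2] at this
      linarith
    have e3 : ∑ m, v m = A + (B + C) := by
      have := Finset.sum_add_sum_compl I v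
      rw [hIsplit] at this
      linarith
    have e4 : ∑ m, w m = A + t * (B + C) := by
      have := Finset.sum_add_sum_compl I w
      rw [hIw, hIsplit, hIcw Iᶜ (le_refl _)] at this
      linarith
    rw [e3] at hS
    rw [e4] at hT
    rw [e1, e2, e3, e4, div_le_div_iff₀ hS hT]
    nlinarith [mul_nonneg (mul_nonneg (sub_nonneg.mpr ht1) hA0) hC0]

lemma le_topSum_aux {n : ℕ} (x : Fin n → ℝ) (s : Finset (Fin n)) :
    ∑ i ∈ s, x i ≤ topSum x s.card := by
  apply le_csSup
  · exact ((Set.toFinite _).image _).bddAbove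
  · exact ⟨s, rfl, rfl⟩

lemma topSum_le_aux {n : ℕ} (x : Fin n → ℝ) (k : ℕ) (hk : k ≤ n) (c : ℝ)
    (h : ∀ s : Finset (Fin n), s.card = k → ∑ i ∈ s, x i ≤ c) : topSum x k ≤ c := by
  apply csSup_le
  · obtain ⟨s, -, hs⟩ := Finset.exists_subset_card_eq
      (s := (Finset.univ : Finset (Fin n))) (n := k) (by simpa using hk)
    exact ⟨_, ⟨s, hs, rfl⟩⟩
  · rintro y ⟨s, hs, rfl⟩; exact h s hs

/-- Majorization: if every inlier loss is at most every outlier loss (inlier priority)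
and all inlier losses are shrunk by a common factor `t ∈ (0, 1]`, then the resulting
normalized loss distribution `q` majorizes the original one `p`: for every
`1 ≤ k ≤ n`, the sum of the `k` largest entries of `q` is at least the sum of the
`k` largest entries of `p`. -/
theorem loss_distribution_majorizes_of_inlier_shrink {n : ℕ}
    (v : Fin n → ℝ) (hv : ∀ k, 0 < v k)
    (I : Finset (Fin n))
    (hprio : ∀ i ∈ I, ∀ j ∈ Iᶜ, v i ≤ v j)
    (t : ℝ) (ht0 : 0 < t) (ht1 : t ≤ 1)
    (p q : Fin n → ℝ)
    (hp : p = fun k => v k / ∑ m, v m)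
    (hq : q = fun k =>
      (if k ∈ I then t * v k else v k) / ∑ m, if m ∈ I then t * v m else v m) :
    ∀ k : ℕ, 1 ≤ k → k ≤ n → topSum q k ≥ topSum p k := by
  intro k hk1 hkn
  have hn : 0 < n := lt_of_lt_of_le hk1 hkn
  haveI : Nonempty (Fin n) := ⟨⟨0, hn⟩⟩
  have hS : 0 < ∑ m, v m := Finset.sum_pos (fun i _ => hv i) Finset.univ_nonempty
  rw [ge_iff_le]
  apply topSum_le_aux p k hkn
  intro s hs
  obtain ⟨s', hcard, hcond, hsum⟩ := exists_good_set_aux v hv I hprio s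
  have hps : ∑ i ∈ s, p i = (∑ i ∈ s, v i) / ∑ m, v m := by
    rw [hp, Finset.sum_div]
  have hqs : ∑ i ∈ s', q i =
      (∑ i ∈ s', if i ∈ I then t * v i else v i) /
        (∑ m, if m ∈ I then t * v m else v m) := by
    rw [hq, Finset.sum_div]
  have step1 : ∑ i ∈ s, p i ≤ (∑ i ∈ s', v i) / ∑ m, v m := by
    rw [hps]
    gcongr
  have step2 := ratio_le_aux v hv I t ht0 ht1 hn s' hcond
  have step3 : ∑ i ∈ s', q i ≤ topSum q k := by
    have := le_topSum_aux q s'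
    rwa [hcard, hs] at this
  rw [hqs] at step3
  linarith
end
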